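/- Discrete elliptic energy bounds (eqs. (90)–(91)): assume the discrete Poincaré inequalities for scalar fields hold with constants C₁, C₂ > 0, i.e. |φ|_0 ≤ C₁ |∇_h φ|_0 for every primary scalar field φ with Σ_{i∈C} A_i φ_i = 0, and |ψ|_0 ≤ C₂ |∇̃⊥_h ψ|_0 for every dual scalar field ψ. Then for every dual scalar field ψ one has |∇̃⊥_h ψ|_0 ≤ (C₂/2) |∇̃_h×(∇̃⊥_h ψ)|_0, and for every primary scalar field φ with Σ_{i∈C} A_i φ_i = 0 one has |∇_h φ|_0 ≤ (C₁/2) |∇_h·(∇_h φ)|_0. Here |·|_0 denotes the respective weighted norms: |φ|_0² = Σ_i A_i φ_i², |ψ|_0² = Σ_ν A_ν ψ_ν², and for discrete vector fields |u|_0² = Σ_e A_e u_e². -/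

import Mathlib

open Finset

noncomputable section

/-- A combinatorial staggered mesh: primary cells `C`, dual cells (vertices) `V`,
edges `E`, with areas, edge lengths, incidence relations and signs. -/
structure StagMesh (C V E : Type) [Fintype C] [Fintype V] [Fintype E]
    [DecidableEq C] [DecidableEq V] where
  /-- primary cell areas -/
  Ac : C → ℝ
  /-- dual cell areas -/
  Av : V → ℝ
  /-- primary edge lengths -/
  l : E → ℝ
  /-- dual edge lengths -/
  d : E → ℝ
  Ac_pos : ∀ i, 0 < Ac i
  Av_pos : ∀ ν, 0 < Av ν
  l_pos : ∀ e, 0 < l e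
  d_pos : ∀ e, 0 < d e
  /-- primary cells incident to an edge -/
  EC : E → Finset C
  /-- vertices (dual cells) incident to an edge -/
  EV : E → Finset V
  /-- sign `n_{e,i}` attached to an incident edge–cell pair -/
  n : E → C → ℝ
  /-- sign `t_{e,ν}` attached to an incident edge–vertex pair -/
  t : E → V → ℝ
  n_sign : ∀ e i, i ∈ EC e → n e i = 1 ∨ n e i = -1
  t_sign : ∀ e ν, ν ∈ EV e → t e ν = 1 ∨ t e ν = -1

namespace StagMesh

variable {C V E : Type} [Fintype C] [Fintype V] [Fintype E]
  [DecidableEq C] [DecidableEq V]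

/-- diamond area `A_e = (1/2) l_e d_e` -/
def Ae (M : StagMesh C V E) (e : E) : ℝ := (1 / 2) * M.l e * M.d e

/-- discrete gradient `[∇_h φ]_e = -(1/d_e) Σ_{i ~ e} n_{e,i} φ_i` -/
def grad (M : StagMesh C V E) (φ : C → ℝ) : E → ℝ :=
  fun e => -(1 / M.d e) * ∑ i ∈ M.EC e, M.n e i * φ i

/-- discrete skew gradient `[∇̃⊥_h ψ]_e = (1/l_e) Σ_{ν ~ e} t_{e,ν} ψ_ν` -/
def skewGrad (M : StagMesh C V E) (ψ : V → ℝ) : E → ℝ :=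
  fun e => (1 / M.l e) * ∑ ν ∈ M.EV e, M.t e ν * ψ ν

/-- discrete divergence `[∇_h·u]_i = (1/A_i) Σ_{e ~ i} l_e n_{e,i} u_e` -/
def dvg (M : StagMesh C V E) (u : E → ℝ) : C → ℝ :=
  fun i => (1 / M.Ac i) * ∑ e ∈ univ.filter (fun e => i ∈ M.EC e), M.l e * M.n e i * u e

/-- discrete curl `[∇̃_h×u]_ν = -(1/A_ν) Σ_{e ~ ν} d_e t_{e,ν} u_e` -/
def curl (M : StagMesh C V E) (u : E → ℝ) : V → ℝ :=
  fun ν => -(1 / M.Av ν) * ∑ e ∈ univ.filter (fun e => ν ∈ M.EV e), M.d e * M.t e ν * u e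

/-- area-weighted inner product on primary scalar fields -/
def innerC (M : StagMesh C V E) (φ φ' : C → ℝ) : ℝ := ∑ i, M.Ac i * φ i * φ' i

/-- area-weighted inner product on dual scalar fields -/
def innerV (M : StagMesh C V E) (ψ ψ' : V → ℝ) : ℝ := ∑ ν, M.Av ν * ψ ν * ψ' ν

/-- diamond-weighted inner product on discrete vector fields -/
def innerE (M : StagMesh C V E) (u u' : E → ℝ) : ℝ := ∑ e, M.Ae e * u e * u' e

/-- weighted `L²` norm on primary scalar fields -/
noncomputable def normC (M : StagMesh C V E) (φ : C → ℝ) : ℝ := Real.sqrt (M.innerC φ φ)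

/-- weighted `L²` norm on dual scalar fields -/
noncomputable def normV (M : StagMesh C V E) (ψ : V → ℝ) : ℝ := Real.sqrt (M.innerV ψ ψ)

/-- weighted `L²` norm on discrete vector fields -/
noncomputable def normE (M : StagMesh C V E) (u : E → ℝ) : ℝ := Real.sqrt (M.innerE u u)

/-- sign-cancellation condition: for every primary cell `i` and vertex `ν`,
`Σ_{e ~ i, e ~ ν} t_{e,ν} n_{e,i} = 0`. -/
def SgnCancel (M : StagMesh C V E) : Prop :=
  ∀ (i : C) (ν : V),
    ∑ e ∈ univ.filter (fun e => i ∈ M.EC e ∧ ν ∈ M.EV e), M.t e ν * M.n e i = 0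

end StagMesh

open StagMesh

/-!
Summation by parts shows that, for the diamond-weighted inner product, `∇_h` and `∇̃⊥_h` are
adjoint to `-(1/2) ∇_h·` and `-(1/2) ∇̃_h×` (the factor `1/2` comes from `A_e = l_e d_e / 2`).
Hence `|∇̃⊥_h ψ|_0² = -(1/2) ⟨ψ, ∇̃_h×∇̃⊥_h ψ⟩`, which Cauchy–Schwarz and the Poincaré
inequality bound by `(C₂/2) |∇̃⊥_h ψ|_0 |∇̃_h×∇̃⊥_h ψ|_0`; dividing by `|∇̃⊥_h ψ|_0` gives the
first bound, and the primary-cell bound is proved the same way.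
-/

theorem Real.abs_sum_weighted_mul_le_sqrt_mul_sqrt {ι : Type*} (s : Finset ι) {w : ι → ℝ}
    (hw : ∀ i ∈ s, 0 ≤ w i) (f g : ι → ℝ) :
    |∑ i ∈ s, w i * f i * g i| ≤
      √(∑ i ∈ s, w i * f i * f i) * √(∑ i ∈ s, w i * g i * g i) := by
  have hself : ∀ a : ι → ℝ, ∀ i ∈ s, 0 ≤ w i * a i * a i := fun a i hi => by
    rw [mul_assoc]; exact mul_nonneg (hw i hi) (mul_self_nonneg _)
  rw [← Real.sqrt_mul (sum_nonneg (hself f))]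
  exact Real.abs_le_sqrt <| sum_sq_le_sum_mul_sum_of_sq_le_mul s (hself f) (hself g)
    fun i _ => le_of_eq (by ring)

theorem le_half_mul_of_sq_le_half_mul {x p q c : ℝ} (hx : 0 ≤ x) (hc : 0 ≤ c) (hq : 0 ≤ q)
    (hsq : x ^ 2 ≤ 1 / 2 * p * q) (hp : p ≤ c * x) : x ≤ c / 2 * q := by
  rcases hx.eq_or_lt with rfl | hx
  · positivity
  · nlinarith

namespace StagMesh

variable {C V E : Type} [Fintype C] [Fintype V] [Fintype E] [DecidableEq C] [DecidableEq V]
  (M : StagMesh C V E)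

theorem Ae_pos (e : E) : 0 < M.Ae e := by
  have := M.l_pos e; have := M.d_pos e; unfold Ae; positivity

theorem sq_normE (u : E → ℝ) : M.normE u ^ 2 = M.innerE u u :=
  Real.sq_sqrt <| sum_nonneg fun e _ => by
    rw [mul_assoc]; exact mul_nonneg (M.Ae_pos e).le (mul_self_nonneg _)

theorem abs_innerC_le (φ φ' : C → ℝ) : |M.innerC φ φ'| ≤ M.normC φ * M.normC φ' :=
  Real.abs_sum_weighted_mul_le_sqrt_mul_sqrt _ (fun i _ => (M.Ac_pos i).le) φ φ'

theorem abs_innerV_le (ψ ψ' : V → ℝ) : |M.innerV ψ ψ'| ≤ M.normV ψ * M.normV ψ' :=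
  Real.abs_sum_weighted_mul_le_sqrt_mul_sqrt _ (fun ν _ => (M.Av_pos ν).le) ψ ψ'

theorem innerE_grad (φ : C → ℝ) (u : E → ℝ) :
    M.innerE (M.grad φ) u = -(1 / 2) * M.innerC φ (M.dvg u) := by
  simp only [innerE, innerC, grad, dvg, Ae, mul_sum, sum_mul]
  rw [sum_comm' (t' := univ) (s' := fun i => univ.filter (i ∈ M.EC ·)) (by simp)]
  refine sum_congr rfl fun i _ => sum_congr rfl fun e _ => ?_
  field_simp [(M.d_pos e).ne', (M.Ac_pos i).ne']

theorem innerE_skewGrad (ψ : V → ℝ) (u : E → ℝ) :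
    M.innerE (M.skewGrad ψ) u = -(1 / 2) * M.innerV ψ (M.curl u) := by
  simp only [innerE, innerV, skewGrad, curl, Ae, mul_sum, sum_mul]
  rw [sum_comm' (t' := univ) (s' := fun ν => univ.filter (ν ∈ M.EV ·)) (by simp)]
  refine sum_congr rfl fun ν _ => sum_congr rfl fun e _ => ?_
  field_simp [(M.l_pos e).ne', (M.Av_pos ν).ne']

theorem sq_normE_grad_le (φ : C → ℝ) :
    M.normE (M.grad φ) ^ 2 ≤ 1 / 2 * M.normC φ * M.normC (M.dvg (M.grad φ)) := by
  rw [sq_normE, innerE_grad, mul_assoc]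
  have := M.abs_innerC_le φ (M.dvg (M.grad φ))
  linarith [neg_abs_le (M.innerC φ (M.dvg (M.grad φ)))]

theorem sq_normE_skewGrad_le (ψ : V → ℝ) :
    M.normE (M.skewGrad ψ) ^ 2 ≤ 1 / 2 * M.normV ψ * M.normV (M.curl (M.skewGrad ψ)) := by
  rw [sq_normE, innerE_skewGrad, mul_assoc]
  have := M.abs_innerV_le ψ (M.curl (M.skewGrad ψ))
  linarith [neg_abs_le (M.innerV ψ (M.curl (M.skewGrad ψ)))]

end StagMesh

/-- discrete elliptic energy bounds: assuming the discrete
Poincaré inequalities for scalar fields with constants `C₁, C₂ > 0`, one has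
`|∇̃⊥_h ψ|_0 ≤ (C₂/2) |∇̃_h×(∇̃⊥_h ψ)|_0` for every dual scalar field `ψ`, and
`|∇_h φ|_0 ≤ (C₁/2) |∇_h·(∇_h φ)|_0` for every zero-weighted-mean primary
scalar field `φ`. -/
theorem elliptic_energy_bounds
    {C V E : Type} [Fintype C] [Fintype V] [Fintype E]
    [DecidableEq C] [DecidableEq V]
    (M : StagMesh C V E)
    (C₁ C₂ : ℝ) (hC₁ : 0 < C₁) (hC₂ : 0 < C₂)
    (hP1 : ∀ φ : C → ℝ, (∑ i, M.Ac i * φ i) = 0 → M.normC φ ≤ C₁ * M.normE (M.grad φ))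
    (hP2 : ∀ ψ : V → ℝ, M.normV ψ ≤ C₂ * M.normE (M.skewGrad ψ)) :
    (∀ ψ : V → ℝ,
      M.normE (M.skewGrad ψ) ≤ (C₂ / 2) * M.normV (M.curl (M.skewGrad ψ))) ∧
    (∀ φ : C → ℝ, (∑ i, M.Ac i * φ i) = 0 →
      M.normE (M.grad φ) ≤ (C₁ / 2) * M.normC (M.dvg (M.grad φ))) :=
  ⟨fun ψ => le_half_mul_of_sq_le_half_mul (Real.sqrt_nonneg _) hC₂.le (Real.sqrt_nonneg _)
      (M.sq_normE_skewGrad_le ψ) (hP2 ψ),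
    fun φ hφ => le_half_mul_of_sq_le_half_mul (Real.sqrt_nonneg _) hC₁.le (Real.sqrt_nonneg _)
      (M.sq_normE_grad_le φ) (hP1 φ hφ)⟩
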